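/- Let T = {(x,y) ∈ ℝ² : x ≥ 0, y ≥ 0, x + y ≤ 1} be the standard reference triangle and let b(x,y) = 27·x·y·(1 − x − y). For every natural number m there exists a constant C > 0 such that for every point x₀ ∈ T and every real polynomial p in two variables of total degree at most m, ∫_T p(x)² dx ≤ C · ∫_T ‖x − x₀‖⁴ · b(x)² · p(x)² dx, with C independent of x₀. -/

import Mathlib

/-!
For any compact `K` with nonempty interior, `p ↦ ∫_K p²` is positive definite on the
finite-dimensional space of polynomials of degree `≤ m` (a polynomial vanishing on an open set is
zero), so by compactness of the unit sphere it dominates `p ↦ ∫_T p²`. Take for `K` a closed ball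
of radius `r` inside `T`, on which `b` is bounded below: if `x₀` is at distance `≥ 2r` from its
centre, the weight `‖x - x₀‖⁴ b²` is bounded below on `K` as well. Every `x₀` is that far from one
of two centres at distance `4r`, which makes the constant uniform in `x₀`.
-/

open MeasureTheory Real

/-- The standard reference triangle `T = {(x,y) : x ≥ 0, y ≥ 0, x + y ≤ 1}` in ℝ². -/
def T : Set (EuclideanSpace ℝ (Fin 2)) := {x | 0 ≤ x 0 ∧ 0 ≤ x 1 ∧ x 0 + x 1 ≤ 1}

/-- The reference element bubble function `b(x,y) = 27·x·y·(1 − x − y)`. -/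
noncomputable def bub (x : EuclideanSpace ℝ (Fin 2)) : ℝ :=
  27 * x 0 * x 1 * (1 - x 0 - x 1)

open Metric Set MvPolynomial

theorem exists_le_mul_of_sq_homogeneous {E : Type*} [NormedAddCommGroup E] [NormedSpace ℝ E]
    [FiniteDimensional ℝ E] {F G : E → ℝ} (hF : Continuous F) (hG : Continuous G)
    (hF_smul : ∀ (t : ℝ) v, F (t • v) = t ^ 2 * F v)
    (hG_smul : ∀ (t : ℝ) v, G (t • v) = t ^ 2 * G v) (hF_pos : ∀ v ≠ 0, 0 < F v) :
    ∃ c > 0, ∀ v, G v ≤ c * F v := by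
  have hF_ne : ∀ u ∈ sphere (0 : E) 1, F u ≠ 0 := fun u hu =>
    (hF_pos u (ne_of_mem_sphere hu one_ne_zero)).ne'
  obtain ⟨M, hM⟩ := (isCompact_sphere (0 : E) 1).bddAbove_image
    (hG.continuousOn.div hF.continuousOn hF_ne)
  refine ⟨max M 1, by positivity, fun v => ?_⟩
  rcases eq_or_ne v 0 with rfl | hv
  · have hG0 : G 0 = 0 := by simpa using hG_smul 0 0
    have hF0 : F 0 = 0 := by simpa using hF_smul 0 0
    rw [hG0, hF0, mul_zero]
  set u := ‖v‖⁻¹ • v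
  have hu : u ∈ sphere (0 : E) 1 := by simp [u, norm_smul, hv]
  have hFu := hF_pos u (ne_of_mem_sphere hu one_ne_zero)
  have hGu : G u ≤ max M 1 * F u := by
    have := hM (mem_image_of_mem _ hu)
    rw [Pi.div_apply, div_le_iff₀ hFu] at this
    exact this.trans (by gcongr; exact le_max_left _ _)
  have hv' : v = ‖v‖ • u := (smul_inv_smul₀ (norm_ne_zero_iff.2 hv) v).symm
  rw [hv', hG_smul, hF_smul, mul_left_comm]
  gcongr

theorem exists_setIntegral_sq_le_mul_setIntegral_sq {X V : Type*} [TopologicalSpace X]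
    [T2Space X] [MeasurableSpace X] [OpensMeasurableSpace X] {μ : Measure X}
    [IsLocallyFiniteMeasure μ] [μ.IsOpenPosMeasure] [AddCommGroup V] [Module ℝ V]
    [FiniteDimensional ℝ V] (ψ : V →ₗ[ℝ] X → ℝ)
    (hψ : ∀ v, Continuous (ψ v)) {S K : Set X} (hS : IsCompact S) (hK : IsCompact K)
    (hψK : ∀ v, EqOn (ψ v) 0 (interior K) → v = 0) :
    ∃ c > 0, ∀ v, ∫ x in S, ψ v x ^ 2 ∂μ ≤ c * ∫ x in K, ψ v x ^ 2 ∂μ := by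
  let b := Module.finBasis ℝ V
  have hψ_coord : ∀ c x, ψ (b.equivFun.symm c) x = ∑ i, c i * ψ (b i) x := by
    simp [Finset.sum_apply]
  have hcont : ∀ A, IsCompact A →
      Continuous fun c => ∫ x in A, ψ (b.equivFun.symm c) x ^ 2 ∂μ := by
    intro A hA
    refine continuous_parametric_integral_of_continuous ?_ hA
    simp only [Function.uncurry_def, hψ_coord]
    have := fun i => hψ (b i)
    fun_prop
  have hsmul : ∀ A (t : ℝ) c, ∫ x in A, ψ (b.equivFun.symm (t • c)) x ^ 2 ∂μ =
      t ^ 2 * ∫ x in A, ψ (b.equivFun.symm c) x ^ 2 ∂μ := by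
    intro A t c
    simp [mul_pow, integral_const_mul]
  have hpos : ∀ c ≠ 0, 0 < ∫ x in K, ψ (b.equivFun.symm c) x ^ 2 ∂μ := by
    intro c hc
    refine (integral_nonneg fun x => sq_nonneg _).lt_of_ne' fun h0 => hc ?_
    have hae := (integral_eq_zero_iff_of_nonneg (fun x => sq_nonneg _)
      (((hψ _).pow 2).continuousOn.integrableOn_compact hK)).1 h0
    have hzero := Measure.eqOn_open_of_ae_eq
      (ae_restrict_of_ae_restrict_of_subset interior_subset hae) isOpen_interior
      ((hψ _).pow 2).continuousOn continuousOn_const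
    exact b.equivFun.symm.map_eq_zero_iff.1
      (hψK _ fun x hx => (pow_eq_zero_iff two_ne_zero).1 (hzero hx))
  obtain ⟨c, hc, hGF⟩ := exists_le_mul_of_sq_homogeneous (hcont K hK) (hcont S hS)
    (hsmul K) (hsmul S) hpos
  exact ⟨c, hc, fun v => by simpa using hGF (b.equivFun v)⟩

theorem MvPolynomial.eq_zero_of_eqOn_zero {σ : Type*} [Fintype σ] {p : MvPolynomial σ ℝ}
    {U : Set (EuclideanSpace ℝ σ)} (hU : IsOpen U) (hU_ne : U.Nonempty)
    (hpU : EqOn (fun x => eval (fun i => x i) p) 0 U) : p = 0 := by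
  obtain ⟨a, ha⟩ := hU_ne
  have hp := (AnalyticOnNhd.eval_linearMap (WithLp.linearEquiv 2 ℝ (σ → ℝ)).toLinearMap p
    ).eqOn_zero_of_preconnected_of_eventuallyEq_zero isPreconnected_univ (mem_univ a)
      (Filter.eventually_of_mem (hU.mem_nhds ha) hpU)
  exact MvPolynomial.funext fun y => by simpa using hp (mem_univ (WithLp.toLp 2 y))

theorem exists_setIntegral_eval_sq_le_mul {σ : Type*} [Fintype σ] (m : ℕ)
    {S K : Set (EuclideanSpace ℝ σ)} (hS : IsCompact S) (hK : IsCompact K)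
    (hK_int : (interior K).Nonempty) :
    ∃ c > 0, ∀ p : MvPolynomial σ ℝ, p.totalDegree ≤ m →
      ∫ x in S, eval (fun i => x i) p ^ 2 ≤ c * ∫ x in K, eval (fun i => x i) p ^ 2 := by
  let ψ : restrictTotalDegree σ ℝ m →ₗ[ℝ] EuclideanSpace ℝ σ → ℝ :=
    (LinearMap.pi fun x => (aeval fun i => x i).toLinearMap) ∘ₗ
      (restrictTotalDegree σ ℝ m).subtype
  have hψ : ∀ p x, ψ p x = eval (fun i => x i) (p : MvPolynomial σ ℝ) := fun _ _ => rfl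
  obtain ⟨c, hc, hSK⟩ := exists_setIntegral_sq_le_mul_setIntegral_sq (μ := volume) ψ
    (fun p => by simp only [funext (hψ p)]; exact (continuous_eval _).comp (by fun_prop)) hS hK
    fun p hp => Subtype.ext <| eq_zero_of_eqOn_zero isOpen_interior hK_int fun x hx => by
      simpa [hψ] using hp hx
  refine ⟨c, hc, fun p hp => ?_⟩
  simpa [hψ] using hSK ⟨p, (mem_restrictTotalDegree σ m p).2 hp⟩

theorem setIntegral_le_inv_mul_setIntegral_mul {X : Type*} [MeasurableSpace X] {μ : Measure X}
    {K S : Set X} {f w : X → ℝ} {ω : ℝ} (hω : 0 < ω) (hKS : K ⊆ S) (hK : MeasurableSet K)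
    (hS : MeasurableSet S) (hf : IntegrableOn f K μ) (hwf : IntegrableOn (fun x => w x * f x) S μ)
    (hf_nonneg : ∀ x ∈ S, 0 ≤ f x) (hw_nonneg : ∀ x ∈ S, 0 ≤ w x) (hωw : ∀ x ∈ K, ω ≤ w x) :
    ∫ x in K, f x ∂μ ≤ ω⁻¹ * ∫ x in S, w x * f x ∂μ := calc
  ∫ x in K, f x ∂μ = ω⁻¹ * ∫ x in K, ω * f x ∂μ := by
    rw [integral_const_mul, inv_mul_cancel_left₀ hω.ne']
  _ ≤ ω⁻¹ * ∫ x in K, w x * f x ∂μ := by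
    refine mul_le_mul_of_nonneg_left ?_ (inv_nonneg.2 hω.le)
    exact setIntegral_mono_on (hf.const_mul ω) (hwf.mono_set hKS) hK fun x hx =>
      mul_le_mul_of_nonneg_right (hωw x hx) (hf_nonneg x (hKS hx))
  _ ≤ ω⁻¹ * ∫ x in S, w x * f x ∂μ := by
    refine mul_le_mul_of_nonneg_left ?_ (inv_nonneg.2 hω.le)
    exact setIntegral_mono_set hwf (ae_restrict_of_forall_mem hS fun x hx =>
      mul_nonneg (hw_nonneg x hx) (hf_nonneg x hx)) hKS.eventuallyLE

theorem isClosed_T : IsClosed T := by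
  have hcoord : ∀ i : Fin 2, Continuous fun x : EuclideanSpace ℝ (Fin 2) => x i := by fun_prop
  exact (isClosed_le continuous_const (hcoord 0)).inter
    ((isClosed_le continuous_const (hcoord 1)).inter
      (isClosed_le ((hcoord 0).add (hcoord 1)) continuous_const))

theorem isCompact_T : IsCompact T := by
  refine isCompact_of_isClosed_isBounded isClosed_T
    ((isBounded_closedBall (x := 0) (r := 1)).subset ?_)
  rintro x ⟨h0, h1, h01⟩
  rw [mem_closedBall_zero_iff, EuclideanSpace.norm_eq, Fin.sum_univ_two]
  exact Real.sqrt_le_one.mpr (by simp only [Real.norm_eq_abs, sq_abs]; nlinarith)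

section Ball

variable {a x : EuclideanSpace ℝ (Fin 2)} {r : ℝ}

theorem abs_sub_apply_le_of_mem_closedBall (hx : x ∈ closedBall a r) (i : Fin 2) :
    |x i - a i| ≤ r :=
  (PiLp.dist_apply_le x a i).trans hx

theorem closedBall_subset_T (h0 : r ≤ a 0) (h1 : r ≤ a 1) (h01 : a 0 + a 1 + 2 * r ≤ 1) :
    closedBall a r ⊆ T := fun x hx => by
  have hx0 := abs_le.1 (abs_sub_apply_le_of_mem_closedBall hx 0)
  have hx1 := abs_le.1 (abs_sub_apply_le_of_mem_closedBall hx 1)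
  exact ⟨by linarith, by linarith, by linarith⟩

theorem le_bub_of_mem_closedBall (h0 : r ≤ a 0) (h1 : r ≤ a 1) (h01 : a 0 + a 1 + 2 * r ≤ 1)
    (hx : x ∈ closedBall a r) :
    27 * (a 0 - r) * (a 1 - r) * (1 - a 0 - a 1 - 2 * r) ≤ bub x := by
  have hx0 := abs_le.1 (abs_sub_apply_le_of_mem_closedBall hx 0)
  have hx1 := abs_le.1 (abs_sub_apply_le_of_mem_closedBall hx 1)
  calc 27 * (a 0 - r) * (a 1 - r) * (1 - a 0 - a 1 - 2 * r)
      ≤ 27 * x 0 * x 1 * (1 - a 0 - a 1 - 2 * r) := by gcongr <;> linarith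
    _ ≤ bub x := by
      have : 0 ≤ x 0 := by linarith
      have : 0 ≤ x 1 := by linarith
      exact mul_le_mul_of_nonneg_left (by linarith) (by positivity)

end Ball

theorem exists_bubble_estimate_of_le_dist (m : ℕ) {a : EuclideanSpace ℝ (Fin 2)} {r : ℝ}
    (hr : 0 < r) (h0 : r < a 0) (h1 : r < a 1) (h01 : a 0 + a 1 + 2 * r < 1) :
    ∃ C > 0, ∀ x₀, 2 * r ≤ dist a x₀ → ∀ p : MvPolynomial (Fin 2) ℝ, p.totalDegree ≤ m →
      ∫ x in T, eval (fun i => x i) p ^ 2 ≤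
        C * ∫ x in T, ‖x - x₀‖ ^ 4 * bub x ^ 2 * eval (fun i => x i) p ^ 2 := by
  set β := 27 * (a 0 - r) * (a 1 - r) * (1 - a 0 - a 1 - 2 * r)
  have hβ : 0 < β := by
    have := sub_pos.2 h0; have := sub_pos.2 h1; have : 0 < 1 - a 0 - a 1 - 2 * r := by linarith
    positivity
  obtain ⟨c, hc, hTK⟩ := exists_setIntegral_eval_sq_le_mul m isCompact_T
    (isCompact_closedBall a r) (by rw [interior_closedBall a hr.ne']; exact nonempty_ball.2 hr)
  refine ⟨c * (r ^ 4 * β ^ 2)⁻¹, by positivity, fun x₀ hx₀ p hp => ?_⟩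
  have hweight : ∀ x ∈ closedBall a r, r ^ 4 * β ^ 2 ≤ ‖x - x₀‖ ^ 4 * bub x ^ 2 := by
    intro x hx
    have hrx : r ≤ ‖x - x₀‖ := by
      rw [← dist_eq_norm]
      linarith [dist_triangle_left a x₀ x, mem_closedBall.1 hx]
    have := le_bub_of_mem_closedBall h0.le h1.le h01.le hx
    gcongr
  have hcont : Continuous fun x : EuclideanSpace ℝ (Fin 2) => eval (fun i => x i) p ^ 2 :=
    ((continuous_eval p).comp (by fun_prop)).pow 2
  rw [mul_assoc]
  refine (hTK p hp).trans (mul_le_mul_of_nonneg_left ?_ hc.le)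
  refine setIntegral_le_inv_mul_setIntegral_mul (by positivity)
    (closedBall_subset_T h0.le h1.le h01.le) measurableSet_closedBall isClosed_T.measurableSet
    (hcont.continuousOn.integrableOn_compact (isCompact_closedBall a r)) ?_
    (fun x _ => sq_nonneg _) (fun x _ => by positivity) hweight
  exact Continuous.continuousOn (by unfold bub; fun_prop) |>.integrableOn_compact isCompact_T

/-- Norm equivalence for the modified bubble function vanishing at the Dirac point:
for every `m` there is `C > 0`, independent of `x₀ ∈ T`, such that for all polynomials
`p` of total degree at most `m`,
`∫_T p² ≤ C ∫_T ‖x − x₀‖⁴ b(x)² p(x)² dx`. -/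
theorem modified_bubble_norm_equivalence (m : ℕ) :
    ∃ C > 0, ∀ x₀ ∈ T, ∀ p : MvPolynomial (Fin 2) ℝ, p.totalDegree ≤ m →
      (∫ x in T, (MvPolynomial.eval (fun i => x i) p) ^ 2) ≤
        C * ∫ x in T, ‖x - x₀‖ ^ 4 * (bub x) ^ 2 * (MvPolynomial.eval (fun i => x i) p) ^ 2 := by
  set a₁ : EuclideanSpace ℝ (Fin 2) := !₂[1 / 4, 1 / 4]
  set a₂ : EuclideanSpace ℝ (Fin 2) := !₂[1 / 2, 1 / 4]
  obtain ⟨C₁, hC₁, h₁⟩ := exists_bubble_estimate_of_le_dist m (a := a₁) (r := 1 / 16)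
    (by norm_num) (by norm_num [a₁]) (by norm_num [a₁]) (by norm_num [a₁])
  obtain ⟨C₂, hC₂, h₂⟩ := exists_bubble_estimate_of_le_dist m (a := a₂) (r := 1 / 16)
    (by norm_num) (by norm_num [a₂]) (by norm_num [a₂]) (by norm_num [a₂])
  refine ⟨max C₁ C₂, by positivity, fun x₀ _ p hp => ?_⟩
  have hsep : 1 / 4 ≤ dist a₁ x₀ + dist a₂ x₀ := calc
    (1 / 4 : ℝ) = dist (a₁ 0) (a₂ 0) := by norm_num [a₁, a₂, Real.dist_eq, abs_of_neg]
    _ ≤ dist a₁ a₂ := PiLp.dist_apply_le a₁ a₂ 0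
    _ ≤ dist a₁ x₀ + dist a₂ x₀ := dist_triangle_right a₁ a₂ x₀
  have hweighted : 0 ≤ ∫ x in T, ‖x - x₀‖ ^ 4 * bub x ^ 2 * eval (fun i => x i) p ^ 2 :=
    integral_nonneg fun x => by positivity
  rcases le_or_gt (2 * (1 / 16)) (dist a₁ x₀) with hfar | hnear
  · exact (h₁ x₀ hfar p hp).trans (mul_le_mul_of_nonneg_right (le_max_left _ _) hweighted)
  · exact (h₂ x₀ (by linarith) p hp).trans
      (mul_le_mul_of_nonneg_right (le_max_right _ _) hweighted)
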